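/- arXiv:1312.0386 — 2 statements merged into one kernel-verified Lean document; each statement's English description precedes it below -/
import Mathlib

section
/- Let β > 1 be an algebraic integer of degree d+1 (d ≥ 1) with minimal polynomial X^{d+1} + b_d X^d + ⋯ + b_0 over ℤ, and define r = (r_0,…,r_{d-1}) ∈ ℝ^d by X^{d+1} + b_d X^d + ⋯ + b_0 = (X − β)(X^d + r_{d-1}X^{d-1} + ⋯ + r_0). Then β has property (F) — i.e., for every γ ∈ ℤ[1/β] with γ ≥ 0 there exist m, k ∈ ℕ such that γ/β^m ∈ [0,1) and T_β^k(γ/β^m) = 0 — if and only if r ∈ D_d^{(0)}, i.e., for every z ∈ ℤ^d there exists k ∈ ℕ with τ_r^k(z) = 0. -/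
open Polynomial

/-- The shift radix system `τ_r : ℤ^d → ℤ^d`. -/
noncomputable def srsMap (d : ℕ) (r : Fin d → ℝ) (z : Fin d → ℤ) : Fin d → ℤ :=
  fun i =>
    if h : (i : ℕ) + 1 < d then z ⟨(i : ℕ) + 1, h⟩
    else -⌊∑ j, r j * (z j : ℝ)⌋

/-- The beta-transformation `T_β(γ) = βγ - ⌊βγ⌋`. -/
noncomputable def betaT (β : ℝ) (x : ℝ) : ℝ := Int.fract (β * x)

/-!
Let `χ(X) = X^d + r_{d-1} X^{d-1} + ⋯ + r_0`, so that the minimal polynomial of `β` is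
`(X - β) χ(X)`. Comparing coefficients, multiplication by `β` shifts the coefficient vector
`(r_0, …, r_{d-1}, 1)` of `χ` down by one place, up to integers. Two consequences:
`z ↦ {r·z}` conjugates `τ_r` to `T_β`, and `ℤ + ℤ r_0 + ⋯ + ℤ r_{d-1}` is stable under
multiplication by `β`, so it contains `ℤ[β]`. As `β` has degree `d + 1`, the numbers
`1, r_0, …, r_{d-1}` are then linearly independent, so `{r·z} = 0` only for `z = 0`.

Property (F) gives finiteness by applying it to `{r·z} ∈ ℤ[1/β]`. Conversely, for
`γ ∈ ℤ[1/β]` some `T_β`-iterate of `γ / β^m ∈ [0, 1)` lies in `ℤ[β] ∩ [0, 1)`, hence is of the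
form `{r·z}`, and the orbit of `z` under `τ_r` reaches `0`.
-/

open Set Submodule

noncomputable def srsCharPoly {d : ℕ} (r : Fin d → ℝ) : ℝ[X] :=
  X ^ d + ∑ i : Fin d, C (r i) * X ^ (i : ℕ)

section CharPoly

variable {d : ℕ} (r : Fin d → ℝ)

lemma coeff_srsCharPoly_val (j : Fin d) : (srsCharPoly r).coeff j = r j := by
  simp [srsCharPoly, coeff_X_pow, Fin.val_inj, j.isLt.ne]

lemma srsCharPoly_monic : (srsCharPoly r).Monic :=
  monic_X_pow_add (degree_sum_fin_lt r)

lemma natDegree_srsCharPoly : (srsCharPoly r).natDegree = d := by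
  rw [srsCharPoly, natDegree_add_eq_left_of_degree_lt, natDegree_X_pow]
  simpa using degree_sum_fin_lt r

lemma coeff_srsCharPoly_self : (srsCharPoly r).coeff d = 1 := by
  simpa [natDegree_srsCharPoly] using (srsCharPoly_monic r).coeff_natDegree

lemma sum_snoc_mul_coeff_srsCharPoly (z : Fin d → ℤ) (n : ℤ) :
    ∑ k : Fin (d + 1), (Fin.snoc (α := fun _ => ℤ) z n k : ℝ) * (srsCharPoly r).coeff k
      = ∑ j, r j * z j + n := by
  simp [Fin.sum_univ_castSucc, coeff_srsCharPoly_val, coeff_srsCharPoly_self, mul_comm]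

end CharPoly

section Factorization

variable {β : ℝ} {P : ℤ[X]} {Q : ℝ[X]}

lemma mul_coeff_zero_of_map_eq (hPQ : P.map (algebraMap ℤ ℝ) = (X - C β) * Q) :
    β * Q.coeff 0 = -P.coeff 0 := by
  have h := congrArg (coeff · 0) hPQ
  simp only [algebraMap_int_eq, coeff_map, eq_intCast, mul_coeff_zero, coeff_sub, coeff_X_zero,
    coeff_C_zero, zero_sub, neg_mul] at h
  linarith

lemma mul_coeff_succ_of_map_eq (hPQ : P.map (algebraMap ℤ ℝ) = (X - C β) * Q) (k : ℕ) :
    β * Q.coeff (k + 1) = Q.coeff k - P.coeff (k + 1) := by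
  have h := congrArg (coeff · (k + 1)) hPQ
  simp only [algebraMap_int_eq, coeff_map, eq_intCast, mul_comm (X - C β),
    coeff_mul_X_sub_C] at h
  linarith

lemma coeff_mem_closure_inv (hβ : β ≠ 0) (hPQ : P.map (algebraMap ℤ ℝ) = (X - C β) * Q)
    (k : ℕ) : Q.coeff k ∈ Subring.closure {β⁻¹} := by
  have hinv : β⁻¹ ∈ Subring.closure {β⁻¹} := Subring.subset_closure (Set.mem_singleton _)
  have hdiv (x : ℝ) : x = β⁻¹ * (β * x) := by field_simp
  induction k with
  | zero =>
    rw [hdiv (Q.coeff 0), mul_coeff_zero_of_map_eq hPQ, ← Int.cast_neg]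
    exact mul_mem hinv (intCast_mem _ _)
  | succ k ih =>
    rw [hdiv (Q.coeff _), mul_coeff_succ_of_map_eq hPQ]
    exact mul_mem hinv (sub_mem ih (intCast_mem _ _))

lemma beta_mul_sum_mul_coeff (hPQ : P.map (algebraMap ℤ ℝ) = (X - C β) * Q) {n : ℕ}
    (w : Fin (n + 1) → ℤ) :
    β * ∑ k : Fin (n + 1), (w k : ℝ) * Q.coeff k
      = ∑ k : Fin n, (w k.succ : ℝ) * Q.coeff k - ∑ k : Fin (n + 1), (w k : ℝ) * P.coeff k := by
  calc β * ∑ k : Fin (n + 1), (w k : ℝ) * Q.coeff k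
      = w 0 * (β * Q.coeff 0) + ∑ k : Fin n, (w k.succ : ℝ) * (β * Q.coeff (k + 1)) := by
        simp [Fin.sum_univ_succ, mul_add, Finset.mul_sum, mul_left_comm]
    _ = _ := by
        simp only [mul_coeff_zero_of_map_eq hPQ, mul_coeff_succ_of_map_eq hPQ, mul_sub,
          Finset.sum_sub_distrib, Fin.sum_univ_succ (f := fun k => (w k : ℝ) * P.coeff k),
          Fin.val_zero, Fin.val_succ, mul_neg]
        ring

end Factorization

/-- `ℤ + ℤ r_0 + ⋯ + ℤ r_{d-1}`, the coefficients of `srsCharPoly r` being `r_0, …, r_{d-1}, 1`. -/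
noncomputable def srsLattice {d : ℕ} (r : Fin d → ℝ) : Submodule ℤ ℝ :=
  span ℤ (range fun k : Fin (d + 1) => (srsCharPoly r).coeff k)

section Lattice

variable {d : ℕ} {r : Fin d → ℝ} {β : ℝ} {P : ℤ[X]}

lemma coeff_mem_srsLattice (r : Fin d → ℝ) (k : ℕ) : (srsCharPoly r).coeff k ∈ srsLattice r := by
  rcases lt_or_ge d k with hk | hk
  · rw [coeff_eq_zero_of_natDegree_lt (by rwa [natDegree_srsCharPoly])]
    exact zero_mem _
  · exact subset_span ⟨⟨k, Nat.lt_succ_of_le hk⟩, rfl⟩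

lemma intCast_mem_srsLattice (r : Fin d → ℝ) (n : ℤ) : (n : ℝ) ∈ srsLattice r := by
  simpa [coeff_srsCharPoly_self] using zsmul_mem (coeff_mem_srsLattice r d) n

lemma beta_mul_coeff_mem_srsLattice (hPr : P.map (algebraMap ℤ ℝ) = (X - C β) * srsCharPoly r)
    (k : ℕ) : β * (srsCharPoly r).coeff k ∈ srsLattice r := by
  cases k with
  | zero =>
    rw [mul_coeff_zero_of_map_eq hPr, ← Int.cast_neg]
    exact intCast_mem_srsLattice r _
  | succ k =>
    rw [mul_coeff_succ_of_map_eq hPr]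
    exact sub_mem (coeff_mem_srsLattice r k) (intCast_mem_srsLattice r _)

lemma beta_mul_mem_srsLattice (hPr : P.map (algebraMap ℤ ℝ) = (X - C β) * srsCharPoly r)
    {x : ℝ} (hx : x ∈ srsLattice r) : β * x ∈ srsLattice r := by
  induction hx using Submodule.span_induction with
  | mem x hx =>
    obtain ⟨k, rfl⟩ := hx
    exact beta_mul_coeff_mem_srsLattice hPr k
  | zero => simp
  | add x y _ _ hx hy => simpa [mul_add] using add_mem hx hy
  | smul n x _ hx => simpa [mul_left_comm] using zsmul_mem hx n

lemma mul_mem_srsLattice (hPr : P.map (algebraMap ℤ ℝ) = (X - C β) * srsCharPoly r)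
    {x y : ℝ} (hx : x ∈ Subring.closure {β}) (hy : y ∈ srsLattice r) : x * y ∈ srsLattice r := by
  induction hx using Subring.closure_induction generalizing y with
  | mem x hx =>
    rw [Set.mem_singleton_iff.mp hx]
    exact beta_mul_mem_srsLattice hPr hy
  | zero => simp
  | one => simpa using hy
  | add x x' _ _ hx hx' => simpa [add_mul] using add_mem (hx hy) (hx' hy)
  | neg x _ hx => simpa using neg_mem (hx hy)
  | mul x x' _ _ hx hx' => simpa [mul_assoc] using hx (hx' hy)

lemma mem_srsLattice_of_mem_closure (hPr : P.map (algebraMap ℤ ℝ) = (X - C β) * srsCharPoly r)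
    {x : ℝ} (hx : x ∈ Subring.closure {β}) : x ∈ srsLattice r := by
  simpa using mul_mem_srsLattice hPr hx (intCast_mem_srsLattice r 1)

lemma exists_eq_intCast_add_of_mem_srsLattice {x : ℝ} (hx : x ∈ srsLattice r) :
    ∃ n : ℤ, ∃ z : Fin d → ℤ, x = n + ∑ j, r j * z j := by
  obtain ⟨c, rfl⟩ := (mem_span_range_iff_exists_fun ℤ).mp hx
  refine ⟨c (Fin.last d), Fin.init c, ?_⟩
  have h := sum_snoc_mul_coeff_srsCharPoly r (Fin.init c) (c (Fin.last d))
  rw [Fin.snoc_init_self] at h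
  simp only [zsmul_eq_mul, h]
  ring

end Lattice

section Independence

variable {d : ℕ} {r : Fin d → ℝ} {β : ℝ} {P : ℤ[X]}

lemma natDegree_eq_of_map_eq (hPr : P.map (algebraMap ℤ ℝ) = (X - C β) * srsCharPoly r) :
    P.natDegree = d + 1 := by
  rw [← natDegree_map_eq_of_injective (algebraMap ℤ ℝ).injective_int, hPr,
    (monic_X_sub_C β).natDegree_mul (srsCharPoly_monic r), natDegree_X_sub_C,
    natDegree_srsCharPoly, add_comm]

lemma linearIndependent_coeff_srsCharPoly (hint : IsIntegral ℤ β)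
    (hPr : (minpoly ℤ β).map (algebraMap ℤ ℝ) = (X - C β) * srsCharPoly r) :
    LinearIndependent ℤ fun k : Fin (d + 1) => (srsCharPoly r).coeff k := by
  refine LinearIndependent.restrict_scalars' ℤ (K := ℚ) ?_
  have hdeg : (minpoly ℚ β).natDegree = d + 1 := by
    rw [minpoly.isIntegrallyClosed_eq_field_fractions' ℚ hint,
      natDegree_map_eq_of_injective (algebraMap ℤ ℚ).injective_int, natDegree_eq_of_map_eq hPr]
  have hpow : span ℚ (range fun i : Fin (minpoly ℚ β).natDegree => β ^ (i : ℕ))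
      ≤ span ℚ (range fun k : Fin (d + 1) => (srsCharPoly r).coeff k) := by
    refine span_le.mpr ?_
    rintro _ ⟨i, rfl⟩
    have hmem : β ^ (i : ℕ) ∈ srsLattice r :=
      mem_srsLattice_of_mem_closure hPr (pow_mem (Subring.subset_closure (Set.mem_singleton β)) _)
    exact span_le_restrictScalars ℤ ℚ _ hmem
  rw [linearIndependent_iff_card_eq_finrank_span]
  refine le_antisymm ?_ (finrank_range_le_card _)
  calc Fintype.card (Fin (d + 1)) = (minpoly ℚ β).natDegree := by rw [Fintype.card_fin, hdeg]
    _ = Module.finrank ℚ (span ℚ (range fun i : Fin (minpoly ℚ β).natDegree => β ^ (i : ℕ))) := by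
      rw [finrank_span_eq_card (linearIndependent_pow β), Fintype.card_fin]
    _ ≤ _ :=
      have := Module.Finite.span_of_finite ℚ (Set.finite_range fun k : Fin (d + 1) =>
        (srsCharPoly r).coeff k)
      Submodule.finrank_mono hpow

lemma eq_zero_of_sum_mul_eq_intCast
    (hind : LinearIndependent ℤ fun k : Fin (d + 1) => (srsCharPoly r).coeff k)
    {z : Fin d → ℤ} {n : ℤ} (h : ∑ j, r j * z j = n) : z = 0 := by
  have hc := Fintype.linearIndependent_iff.mp hind (Fin.snoc z (-n)) (by
    simpa [zsmul_eq_mul, h] using sum_snoc_mul_coeff_srsCharPoly r z (-n))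
  funext j
  simpa using hc j.castSucc

end Independence

section Conjugacy

variable {d : ℕ} {r : Fin d → ℝ} {β : ℝ} {P : ℤ[X]}

lemma srsMap_eq_tail_snoc (z : Fin d → ℤ) :
    srsMap d r z = Fin.tail (Fin.snoc (α := fun _ => ℤ) z (-⌊∑ j, r j * (z j : ℝ)⌋)) := by
  funext i
  simp only [srsMap, Fin.tail, Fin.snoc, Fin.val_succ, Fin.castLT]
  split_ifs <;> rfl

lemma fract_sum_mul_srsMap (hPr : P.map (algebraMap ℤ ℝ) = (X - C β) * srsCharPoly r)
    (z : Fin d → ℤ) :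
    Int.fract (∑ j, r j * (srsMap d r z j : ℝ)) = betaT β (Int.fract (∑ j, r j * (z j : ℝ))) := by
  set w := Fin.snoc (α := fun _ => ℤ) z (-⌊∑ j, r j * (z j : ℝ)⌋)
  have hfract : Int.fract (∑ j, r j * (z j : ℝ)) = ∑ k, (w k : ℝ) * (srsCharPoly r).coeff k := by
    rw [sum_snoc_mul_coeff_srsCharPoly, Int.fract, Int.cast_neg, sub_eq_add_neg]
  have hshift : ∑ j, r j * (srsMap d r z j : ℝ)
      = ∑ k : Fin d, (w k.succ : ℝ) * (srsCharPoly r).coeff k := by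
    simp [srsMap_eq_tail_snoc, Fin.tail, coeff_srsCharPoly_val, w, mul_comm]
  rw [betaT, hfract, beta_mul_sum_mul_coeff hPr, ← hshift]
  exact_mod_cast (Int.fract_sub_intCast _ _).symm

lemma semiconj_fract_srsMap_betaT (hPr : P.map (algebraMap ℤ ℝ) = (X - C β) * srsCharPoly r) :
    Function.Semiconj (fun z : Fin d → ℤ => Int.fract (∑ j, r j * (z j : ℝ)))
      (srsMap d r) (betaT β) :=
  fract_sum_mul_srsMap hPr

end Conjugacy

section BetaTransformation

lemma betaT_zero (β : ℝ) : betaT β 0 = 0 := by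
  simp [betaT]

lemma mapsTo_betaT (β : ℝ) : MapsTo (betaT β) (Ico 0 1) (Ico 0 1) :=
  fun _ _ => ⟨Int.fract_nonneg _, Int.fract_lt_one _⟩

variable {β : ℝ}

lemma iterate_betaT_div_pow (hβ : 1 ≤ β) {x : ℝ} (hx : x ∈ Ico 0 1) (m : ℕ) :
    (betaT β)^[m] (x / β ^ m) = x := by
  induction m with
  | zero => simp
  | succ m ih =>
    have hpos : 0 < β ^ m := pow_pos (by linarith) m
    have hstep : betaT β (x / β ^ (m + 1)) = x / β ^ m := by
      rw [betaT, show β * (x / β ^ (m + 1)) = x / β ^ m by field_simp; ring, Int.fract_eq_self]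
      exact ⟨div_nonneg hx.1 hpos.le, (div_lt_one hpos).2 (hx.2.trans_le (one_le_pow₀ hβ))⟩
    rw [Function.iterate_succ_apply, hstep, ih]

lemma iterate_betaT_eq_zero_of_div_pow (hβ : 1 ≤ β) {x : ℝ} (hx : x ∈ Ico 0 1) {m k : ℕ}
    (h : (betaT β)^[k] (x / β ^ m) = 0) : (betaT β)^[k] x = 0 := by
  rw [← iterate_betaT_div_pow hβ hx m, ← Function.iterate_add_apply, add_comm,
    Function.iterate_add_apply, h, Function.iterate_fixed (betaT_zero β)]

lemma iterate_betaT_mem_closure {k : ℕ} {x : ℝ} (hx : β ^ k * x ∈ Subring.closure {β}) :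
    (betaT β)^[k] x ∈ Subring.closure {β} := by
  induction k generalizing x with
  | zero => simpa using hx
  | succ k ih =>
    rw [Function.iterate_succ_apply]
    apply ih
    have hβ : β ∈ Subring.closure {β} := Subring.subset_closure (Set.mem_singleton β)
    rw [betaT, Int.fract, mul_sub, ← mul_assoc, ← pow_succ]
    exact sub_mem hx (mul_mem (pow_mem hβ k) (intCast_mem _ _))

lemma exists_pow_mul_mem_closure (hβ : β ≠ 0) {γ : ℝ} (hγ : γ ∈ Subring.closure {β⁻¹}) :
    ∃ n : ℕ, β ^ n * γ ∈ Subring.closure {β} := by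
  have hβS : β ∈ Subring.closure {β} := Subring.subset_closure (Set.mem_singleton β)
  induction hγ using Subring.closure_induction with
  | mem x hx =>
    refine ⟨1, ?_⟩
    rw [Set.mem_singleton_iff.mp hx, pow_one, mul_inv_cancel₀ hβ]
    exact one_mem _
  | zero => exact ⟨0, by simp⟩
  | one => exact ⟨0, by simp⟩
  | add x y _ _ hx hy =>
    obtain ⟨m, hm⟩ := hx
    obtain ⟨n, hn⟩ := hy
    refine ⟨m + n, ?_⟩
    have : β ^ (m + n) * (x + y) = β ^ n * (β ^ m * x) + β ^ m * (β ^ n * y) := by ring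
    rw [this]
    exact add_mem (mul_mem (pow_mem hβS n) hm) (mul_mem (pow_mem hβS m) hn)
  | neg x _ hx =>
    obtain ⟨n, hn⟩ := hx
    exact ⟨n, by simpa using neg_mem hn⟩
  | mul x y _ _ hx hy =>
    obtain ⟨m, hm⟩ := hx
    obtain ⟨n, hn⟩ := hy
    refine ⟨m + n, ?_⟩
    have : β ^ (m + n) * (x * y) = (β ^ m * x) * (β ^ n * y) := by ring
    rw [this]
    exact mul_mem hm hn

end BetaTransformation

def HasPropertyF (β : ℝ) : Prop :=
  ∀ γ : ℝ, γ ∈ Subring.closure ({β⁻¹} : Set ℝ) → 0 ≤ γ →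
    ∃ m k : ℕ, γ / β ^ m ∈ Ico 0 1 ∧ (betaT β)^[k] (γ / β ^ m) = 0

def SRSFinite (d : ℕ) (r : Fin d → ℝ) : Prop :=
  ∀ z : Fin d → ℤ, ∃ k : ℕ, (srsMap d r)^[k] z = 0

section Equivalence

variable {d : ℕ} {r : Fin d → ℝ} {β : ℝ} {P : ℤ[X]}

lemma srsFinite_of_hasPropertyF (hβ : 1 < β)
    (hPr : P.map (algebraMap ℤ ℝ) = (X - C β) * srsCharPoly r)
    (hind : LinearIndependent ℤ fun k : Fin (d + 1) => (srsCharPoly r).coeff k)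
    (hF : HasPropertyF β) : SRSFinite d r := by
  intro z
  set x := Int.fract (∑ j, r j * (z j : ℝ))
  have hx : x ∈ Ico 0 1 := ⟨Int.fract_nonneg _, Int.fract_lt_one _⟩
  have hxmem : x ∈ Subring.closure {β⁻¹} := by
    refine sub_mem (sum_mem fun j _ => mul_mem ?_ (intCast_mem _ _)) (intCast_mem _ _)
    simpa [coeff_srsCharPoly_val] using coeff_mem_closure_inv (by positivity) hPr j
  obtain ⟨m, k, -, hk⟩ := hF x hxmem hx.1
  have hzero := iterate_betaT_eq_zero_of_div_pow hβ.le hx hk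
  rw [← (semiconj_fract_srsMap_betaT hPr).iterate_right k z, Int.fract_eq_zero_iff] at hzero
  obtain ⟨n, hn⟩ := hzero
  exact ⟨k, eq_zero_of_sum_mul_eq_intCast hind hn.symm⟩

lemma hasPropertyF_of_srsFinite (hβ : 1 < β)
    (hPr : P.map (algebraMap ℤ ℝ) = (X - C β) * srsCharPoly r)
    (hfin : SRSFinite d r) : HasPropertyF β := by
  intro γ hγ hγ0
  obtain ⟨n, hn⟩ := exists_pow_mul_mem_closure (by positivity) hγ
  obtain ⟨m, hm⟩ := pow_unbounded_of_one_lt γ hβ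
  have hpos : 0 < β ^ m := by positivity
  have hy : γ / β ^ m ∈ Ico 0 1 := ⟨div_nonneg hγ0 hpos.le, (div_lt_one hpos).mpr hm⟩
  obtain ⟨x, hxdef⟩ : ∃ x, (betaT β)^[m + n] (γ / β ^ m) = x := ⟨_, rfl⟩
  have hx : x ∈ Subring.closure {β} := hxdef ▸ iterate_betaT_mem_closure (by
    rwa [show β ^ (m + n) * (γ / β ^ m) = β ^ n * γ by rw [pow_add]; field_simp])
  obtain ⟨N, z, hz⟩ :=
    exists_eq_intCast_add_of_mem_srsLattice (mem_srsLattice_of_mem_closure hPr hx)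
  have hxz : x = Int.fract (∑ j, r j * (z j : ℝ)) := by
    rw [← Int.fract_intCast_add N, ← hz, ← hxdef,
      Int.fract_eq_self.mpr ((mapsTo_betaT β).iterate _ hy)]
  obtain ⟨k, hk⟩ := hfin z
  refine ⟨m, k + (m + n), hy, ?_⟩
  rw [Function.iterate_add_apply, hxdef, hxz,
    ← (semiconj_fract_srsMap_betaT hPr).iterate_right k z, hk]
  simp

end Equivalence

theorem propertyF_iff_srs_finiteness_general (d : ℕ) (β : ℝ) (hβ : 1 < β)
    (hint : IsIntegral ℤ β) (b : Fin (d + 1) → ℤ)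
    (hmin : minpoly ℤ β
      = X ^ (d + 1) + ∑ i : Fin (d + 1), C (b i) * X ^ (i : ℕ))
    (r : Fin d → ℝ)
    (hfac : (X ^ (d + 1) + ∑ i : Fin (d + 1), C ((b i : ℝ)) * X ^ (i : ℕ))
      = (X - C β) * (X ^ d + ∑ i : Fin d, C (r i) * X ^ (i : ℕ))) :
    (∀ γ : ℝ, γ ∈ Subring.closure ({β⁻¹} : Set ℝ) → 0 ≤ γ →
        ∃ m k : ℕ, γ / β ^ m ∈ Set.Ico (0 : ℝ) 1 ∧ (betaT β)^[k] (γ / β ^ m) = 0)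
      ↔ (∀ z : Fin d → ℤ, ∃ k : ℕ, (srsMap d r)^[k] z = 0) := by
  have hPr : (minpoly ℤ β).map (algebraMap ℤ ℝ) = (X - C β) * srsCharPoly r := by
    simpa [hmin, srsCharPoly, Polynomial.map_sum] using hfac
  exact ⟨srsFinite_of_hasPropertyF hβ hPr (linearIndependent_coeff_srsCharPoly hint hPr),
    hasPropertyF_of_srsFinite hβ hPr⟩

/-- `β` has property (F) if and only if `r ∈ D_d^{(0)}`. -/
theorem propertyF_iff_srs_finiteness (d : ℕ) (hd : 1 ≤ d) (β : ℝ) (hβ : 1 < β)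
    (hint : IsIntegral ℤ β) (b : Fin (d + 1) → ℤ)
    (hmin : minpoly ℤ β
      = X ^ (d + 1) + ∑ i : Fin (d + 1), C (b i) * X ^ (i : ℕ))
    (r : Fin d → ℝ)
    (hfac : (X ^ (d + 1) + ∑ i : Fin (d + 1), C ((b i : ℝ)) * X ^ (i : ℕ))
      = (X - C β) * (X ^ d + ∑ i : Fin d, C (r i) * X ^ (i : ℕ))) :
    (∀ γ : ℝ, γ ∈ Subring.closure ({β⁻¹} : Set ℝ) → 0 ≤ γ →
        ∃ m k : ℕ, γ / β ^ m ∈ Set.Ico (0 : ℝ) 1 ∧ (betaT β)^[k] (γ / β ^ m) = 0)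
      ↔ (∀ z : Fin d → ℤ, ∃ k : ℕ, (srsMap d r)^[k] z = 0) :=
  propertyF_iff_srs_finiteness_general d β hβ hint b hmin r hfac
end

section
/- If r = (r_0, r_1) ∈ D_2^{(0)}, i.e., for every z ∈ ℤ² there exists k ∈ ℕ with τ_r^k(z) = (0,0), then every complex root of X² + r_1 X + r_0 has modulus strictly less than 1; equivalently, |r_0| < 1 and |r_1| < r_0 + 1. In other words, D_2^{(0)} ⊂ E_2. -/
/-!
If `|r₀| ≥ 1`, then `τ_r z = 0` forces `z = 0`, so no nonzero orbit ever reaches `0`.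
If `|r₁| ≥ r₀ + 1`, let `ε = ±1` with `ε r₁ = -|r₁|` and let `a` be the first coordinate of the
orbit of `(1, ε)`; the twisted sequence `t n = εⁿ a n` satisfies `t 0 = t 1 = 1` and
`t (n+2) > |r₁| t (n+1) - r₀ t n - 1`, which keeps it `≥ 1`, so the orbit never reaches `0`.
Finally `|r₀| < 1` and `|r₁| < r₀ + 1` are the Schur–Cohn conditions: `X² + r₁ X + r₀` is positive
at every real `x` with `|x| ≥ 1`, and a non-real root `μ` has `|μ|² = μ μ̄ = r₀`.
-/

open Polynomial

lemma mul_floor_mul_lt_add_one (y : ℝ) {δ : ℤ} (hδ : δ = 1 ∨ δ = -1) :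
    (δ : ℝ) * ⌊δ * y⌋ < y + 1 := by
  rcases hδ with rfl | rfl
  · simpa using Int.floor_le y |>.trans_lt (lt_add_one y)
  · have := Int.sub_one_lt_floor (-y)
    simp only [Int.cast_neg, Int.cast_one, neg_one_mul]
    linarith

lemma one_le_of_lt_linear_recurrence {a b : ℝ} (ha : -1 < a) (hab : a + 1 ≤ b) {t : ℕ → ℤ}
    (h0 : t 0 = 1) (h1 : t 1 = 1) (hrec : ∀ n, b * t (n + 1) - a * t n - 1 < t (n + 2))
    (n : ℕ) : 1 ≤ t n := by
  rcases le_or_gt 0 a with ha0 | ha0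
  · suffices ∀ n, 1 ≤ t n ∧ t n ≤ t (n + 1) from (this n).1
    intro n
    induction n with
    | zero => simp [h0, h1]
    | succ m ih =>
      obtain ⟨hm, hmono⟩ := ih
      refine ⟨by omega, ?_⟩
      have hm' : (1 : ℝ) ≤ t m := by exact_mod_cast hm
      have hmono' : (t m : ℝ) ≤ t (m + 1) := by exact_mod_cast hmono
      have : (t (m + 1) : ℝ) - 1 < t (m + 2) := by nlinarith [hrec m]
      have : t (m + 1) - 1 < t (m + 2) := by exact_mod_cast this
      show t (m + 1) ≤ t (m + 2)
      omega
  · -- for `a < 0`, `t (n+2) + 1` exceeds a convex combination of `t n` and `t (n+1)`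
    induction n using Nat.twoStepInduction with
    | zero => simp [h0]
    | one => simp [h1]
    | more m hm hm1 =>
      have hm' : (1 : ℝ) ≤ t m := by exact_mod_cast hm
      have hm1' : (1 : ℝ) ≤ t (m + 1) := by exact_mod_cast hm1
      have : (0 : ℝ) < t (m + 2) := by nlinarith [hrec m]
      have : 0 < t (m + 2) := by exact_mod_cast this
      omega

lemma abs_lt_one_of_sq_add_mul_add_eq_zero {a b x : ℝ} (ha : a < 1) (hb : |b| < a + 1)
    (hx : x ^ 2 + b * x + a = 0) : |x| < 1 := by
  obtain ⟨hb₁, hb₂⟩ := abs_lt.mp hb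
  rw [abs_lt]
  constructor <;> by_contra! hle
  · nlinarith [mul_nonneg (by linarith : (0 : ℝ) ≤ -(x + 1)) (by linarith : (0 : ℝ) ≤ 1 - x - b)]
  · nlinarith [mul_nonneg (by linarith : (0 : ℝ) ≤ x - 1) (by linarith : (0 : ℝ) ≤ x + 1 + b)]

lemma norm_lt_one_of_sq_add_mul_add_eq_zero {a b : ℝ} {μ : ℂ} (ha : a < 1) (hb : |b| < a + 1)
    (hμ : μ ^ 2 + b * μ + a = 0) : ‖μ‖ < 1 := by
  by_cases hreal : (starRingEnd ℂ) μ = μ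
  · obtain ⟨x, rfl⟩ : ∃ x : ℝ, (x : ℂ) = μ := ⟨μ.re, Complex.conj_eq_iff_re.mp hreal⟩
    rw [Complex.norm_real, Real.norm_eq_abs]
    exact abs_lt_one_of_sq_add_mul_add_eq_zero ha hb (by exact_mod_cast hμ)
  · have hconj : (starRingEnd ℂ) μ ^ 2 + b * (starRingEnd ℂ) μ + a = 0 := by
      simpa using congrArg (starRingEnd ℂ) hμ
    have hsum : μ + (starRingEnd ℂ) μ + b = 0 := by
      refine (mul_eq_zero.mp ?_).resolve_left (sub_ne_zero.mpr (Ne.symm hreal))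
      linear_combination hμ - hconj
    have hnormSq : (‖μ‖ ^ 2 : ℂ) = a := by
      rw [← Complex.mul_conj']
      linear_combination μ * hsum - hμ
    have : ‖μ‖ ^ 2 < 1 := by
      have : ‖μ‖ ^ 2 = a := by exact_mod_cast hnormSq
      linarith
    nlinarith [norm_nonneg μ]

section SRS

variable {r : Fin 2 → ℝ} {z : Fin 2 → ℤ}

@[simp]
lemma srsMap_two_apply_zero : srsMap 2 r z 0 = z 1 := by
  simp [srsMap]

@[simp]
lemma srsMap_two_apply_one : srsMap 2 r z 1 = -⌊r 0 * z 0 + r 1 * z 1⌋ := by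
  simp [srsMap, Fin.sum_univ_two]

lemma eq_zero_of_srsMap_two_eq_zero (hr : 1 ≤ |r 0|) (hz : srsMap 2 r z = 0) : z = 0 := by
  have hz1 : z 1 = 0 := by simpa using congrFun hz 0
  have hfloor : ⌊r 0 * z 0⌋ = 0 := by simpa [hz1] using congrFun hz 1
  have hlt : |r 0| * |(z 0 : ℝ)| < 1 := by
    obtain ⟨hlo, hhi⟩ := Int.floor_eq_zero_iff.mp hfloor
    rw [← abs_mul, abs_lt]
    constructor <;> linarith
  have hz0 : |z 0| < 1 := by
    have : |(z 0 : ℝ)| < 1 := by nlinarith [abs_nonneg (z 0 : ℝ)]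
    exact_mod_cast this
  ext i
  fin_cases i
  · simpa using hz0
  · simpa using hz1

lemma iterate_srsMap_two_ne_zero (hr : 1 ≤ |r 0|) (hz : z ≠ 0) (k : ℕ) :
    (srsMap 2 r)^[k] z ≠ 0 :=
  Set.MapsTo.iterate (s := {0}ᶜ) (fun _ hx hfx => hx (eq_zero_of_srsMap_two_eq_zero hr hfx)) k hz

variable (r z) in
/-- The orbit of `z` under `τ_r`, read as the sequence `a` with `τ_r^n z = (a n, a (n+1))`. -/
noncomputable def srsSeq (n : ℕ) : ℤ :=
  ((srsMap 2 r)^[n] z) 0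

lemma iterate_srsMap_two_apply_one (n : ℕ) : ((srsMap 2 r)^[n] z) 1 = srsSeq r z (n + 1) := by
  rw [srsSeq, Function.iterate_succ_apply', srsMap_two_apply_zero]

lemma srsSeq_add_two (n : ℕ) :
    srsSeq r z (n + 2) = -⌊r 0 * srsSeq r z n + r 1 * srsSeq r z (n + 1)⌋ := by
  rw [← iterate_srsMap_two_apply_one, Function.iterate_succ_apply', srsMap_two_apply_one,
    iterate_srsMap_two_apply_one]
  rfl

lemma srsSeq_twist_lower_bound {ε : ℤ} (hε : ε = 1 ∨ ε = -1) (n : ℕ) :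
    -(ε * r 1) * ((ε ^ (n + 1) * srsSeq r z (n + 1) : ℤ) : ℝ)
      - r 0 * ((ε ^ n * srsSeq r z n : ℤ) : ℝ) - 1
      < ((ε ^ (n + 2) * srsSeq r z (n + 2) : ℤ) : ℝ) := by
  have hε2 : ε ^ 2 = 1 := by rcases hε with rfl | rfl <;> norm_num
  have hεε : (ε : ℝ) * ε = 1 := by rw [← sq]; exact_mod_cast hε2
  rw [srsSeq_add_two, pow_add ε n 2, hε2, mul_one, pow_succ]
  have hδ : ε ^ n = 1 ∨ ε ^ n = -1 := by
    rcases hε with rfl | rfl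
    · simp
    · exact neg_one_pow_eq_or ℤ n
  set δ := ε ^ n
  have hδδ : (δ : ℝ) * δ = 1 := by rcases hδ with h | h <;> rw [h] <;> norm_num
  set y := r 0 * (δ * srsSeq r z n : ℤ) + ε * r 1 * (δ * ε * srsSeq r z (n + 1) : ℤ)
  have hy : r 0 * srsSeq r z n + r 1 * srsSeq r z (n + 1) = δ * y := by
    simp only [y]; push_cast
    linear_combination (-(r 0 * srsSeq r z n) - r 1 * srsSeq r z (n + 1) * ε * ε) * hδδ
      - r 1 * srsSeq r z (n + 1) * hεε
  have key := mul_floor_mul_lt_add_one y hδ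
  rw [hy]
  simp only [y] at key ⊢
  push_cast at key ⊢
  linear_combination key

lemma exists_forall_iterate_srsMap_two_ne_zero (h0 : -1 < r 0) (h1 : r 0 + 1 ≤ |r 1|) :
    ∃ z : Fin 2 → ℤ, ∀ k, (srsMap 2 r)^[k] z ≠ 0 := by
  obtain ⟨ε, hε, hεr⟩ : ∃ ε : ℤ, (ε = 1 ∨ ε = -1) ∧ -(ε * r 1) = |r 1| := by
    rcases le_or_gt 0 (r 1) with hr | hr
    · exact ⟨-1, Or.inr rfl, by simp [abs_of_nonneg hr]⟩
    · exact ⟨1, Or.inl rfl, by simp [abs_of_neg hr]⟩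
  refine ⟨![1, ε], fun k hk => ?_⟩
  have hpos := one_le_of_lt_linear_recurrence h0 h1 (t := fun n => ε ^ n * srsSeq r ![1, ε] n)
    (by simp [srsSeq]) (by rcases hε with rfl | rfl <;> simp [srsSeq])
    (fun n => hεr ▸ srsSeq_twist_lower_bound hε n) k
  have : srsSeq r ![1, ε] k = 0 := by simp [srsSeq, hk]
  simp [this] at hpos

end SRS

/-- `D_2^{(0)} ⊂ E_2`: if `τ_r` has the finiteness property then every
complex root of `X² + r_1 X + r_0` has modulus `< 1`; equivalently `|r_0| < 1` and
`|r_1| < r_0 + 1`. -/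
theorem D2_zero_subset_E2 (r : Fin 2 → ℝ)
    (hfin : ∀ z : Fin 2 → ℤ, ∃ k : ℕ, (srsMap 2 r)^[k] z = 0) :
    (∀ μ : ℂ, μ ^ 2 + (r 1 : ℂ) * μ + (r 0 : ℂ) = 0 → ‖μ‖ < 1)
    ∧ |r 0| < 1 ∧ |r 1| < r 0 + 1 := by
  have h0 : |r 0| < 1 := by
    by_contra! hr
    obtain ⟨k, hk⟩ := hfin 1
    exact iterate_srsMap_two_ne_zero hr one_ne_zero k hk
  have h1 : |r 1| < r 0 + 1 := by
    by_contra! hr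
    obtain ⟨z, hz⟩ := exists_forall_iterate_srsMap_two_ne_zero (abs_lt.mp h0).1 hr
    obtain ⟨k, hk⟩ := hfin z
    exact hz k hk
  exact ⟨fun μ hμ => norm_lt_one_of_sq_add_mul_add_eq_zero (abs_lt.mp h0).2 h1 hμ, h0, h1⟩
end
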